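/- Let A be an n×n symmetric positive definite real matrix that is ultrametric. Then the inverse of A is a weakly diagonally dominant Stieltjes matrix (every symmetric positive definite ultrametric matrix is the inverse of a weakly diagonally dominant M-matrix). -/

import Mathlib

open Matrix Finset
open scoped RealInnerProductSpace

noncomputable section

/-- The vertex Gramian of the simplex with vertices `v` associated with vertex `v ℓ`. -/
def vGram {n : ℕ} (v : Fin (n + 1) → EuclideanSpace ℝ (Fin n)) (ℓ : Fin (n + 1)) :
    Matrix {k : Fin (n + 1) // k ≠ ℓ} {k : Fin (n + 1) // k ≠ ℓ} ℝ :=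
  Matrix.of fun i j => ⟪v i.1 - v ℓ, v j.1 - v ℓ⟫

/-- A Stieltjes matrix: symmetric positive definite with nonpositive off-diagonal entries. -/
def IsStieltjes {ι : Type*} [Fintype ι] (M : Matrix ι ι ℝ) : Prop :=
  M.PosDef ∧ ∀ i j, i ≠ j → M i j ≤ 0

/-- Weakly diagonally dominant: `M e ≥ 0` entrywise for the all-ones vector `e`. -/
def IsWDD {ι : Type*} [Fintype ι] (M : Matrix ι ι ℝ) : Prop :=
  ∀ i, 0 ≤ ∑ j, M i j

/-- Pointwise weakly diagonally dominant: each diagonal entry is maximal in its row. -/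
def PWDD {ι : Type*} (M : Matrix ι ι ℝ) : Prop :=
  ∀ i j, M i j ≤ M i i

/-- The orthogonal projection of `x` onto the affine span of `{v k : k ∈ s}`
lies in the convex hull of `{v k : k ∈ s}`. -/
def ProjInHull {n : ℕ} (x : EuclideanSpace ℝ (Fin n))
    (v : Fin (n + 1) → EuclideanSpace ℝ (Fin n)) (s : Set (Fin (n + 1))) : Prop :=
  ∃ p ∈ convexHull ℝ (v '' s), ∀ a ∈ s, ∀ b ∈ s, ⟪x - p, v a - v b⟫ = 0

/-- All facets of the simplex are nonobtuse: each vertex `v i` projects, for each `j ≠ i`,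
into the convex hull of the vertices other than `v i, v j`. -/
def FacetsNonobtuse {n : ℕ} (v : Fin (n + 1) → EuclideanSpace ℝ (Fin n)) : Prop :=
  ∀ i j : Fin (n + 1), i ≠ j → ProjInHull (v i) v {k | k ≠ i ∧ k ≠ j}

/-- `q` is an inward normal to the facet opposite `v j`. -/
def IsInwardNormal {n : ℕ} (v : Fin (n + 1) → EuclideanSpace ℝ (Fin n)) (j : Fin (n + 1))
    (q : EuclideanSpace ℝ (Fin n)) : Prop :=
  q ≠ 0 ∧ (∀ a b : Fin (n + 1), a ≠ j → b ≠ j → ⟪q, v a - v b⟫ = 0) ∧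
    ∀ k : Fin (n + 1), k ≠ j → 0 < ⟪q, v j - v k⟫

/-- The `j`-th column of `A` is a blocking column: no off-diagonal entry of column `j`
is minimal in its row. -/
def IsBlockingCol {ι : Type*} (A : Matrix ι ι ℝ) (j : ι) : Prop :=
  ∀ i, i ≠ j → ∃ k, A i k < A i j

/-- `A` is nonblocking: every column has an off-diagonal entry minimal in its row. -/
def IsNonblocking {ι : Type*} (A : Matrix ι ι ℝ) : Prop :=
  ∀ j, ∃ i, i ≠ j ∧ ∀ k, A i j ≤ A i k

/-- A (symmetric nonnegative) ultrametric matrix. -/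
def IsUltra {ι : Type*} (A : Matrix ι ι ℝ) : Prop :=
  (∀ i j, 0 ≤ A i j) ∧ (∀ i j, A i j ≤ A i i) ∧ ∀ i j k, min (A i k) (A k j) ≤ A i j

/-- The principal submatrix of `A` with rows and columns restricted to `s`. -/
def subMat {ι : Type*} (A : Matrix ι ι ℝ) (s : Finset ι) :
    Matrix {x // x ∈ s} {x // x ∈ s} ℝ :=
  A.submatrix (fun i => i.1) (fun j => j.1)

/-- The principal submatrix of `A` obtained by deleting row and column `m`. -/
def delMat {ι : Type*} (A : Matrix ι ι ℝ) (m : ι) : Matrix {i // i ≠ m} {i // i ≠ m} ℝ :=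
  A.submatrix (fun i => i.1) (fun j => j.1)

section Tetra

variable {V : Type*} [NormedAddCommGroup V] [InnerProductSpace ℝ V]

/-- The triangle with vertices `a, b, c` is nonobtuse. -/
def NonobtuseTri (a b c : V) : Prop :=
  0 ≤ ⟪b - a, c - a⟫ ∧ 0 ≤ ⟪a - b, c - b⟫ ∧ 0 ≤ ⟪a - c, b - c⟫

/-- The sub-orthocentric set of the triangle `a b c`: the union over the vertices of the
closed segments from the vertex to the orthocenter. -/
def SubOrthoSet (a b c : V) : Set V :=
  {x | ∃ h, h ∈ affineSpan ℝ ({a, b, c} : Set V) ∧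
    ⟪h - a, b - c⟫ = 0 ∧ ⟪h - b, a - c⟫ = 0 ∧
    (x ∈ segment ℝ a h ∨ x ∈ segment ℝ b h ∨ x ∈ segment ℝ c h)}

/-- `p` is the orthogonal projection of `x` onto the affine span of `{a, b, c}`. -/
def IsOrthProjTri (x p a b c : V) : Prop :=
  p ∈ affineSpan ℝ ({a, b, c} : Set V) ∧ ⟪x - p, b - a⟫ = 0 ∧ ⟪x - p, c - a⟫ = 0

/-- A sub-orthocentric tetrahedron: all triangular faces are nonobtuse and each vertex
projects orthogonally into the sub-orthocentric set of its opposite face. -/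
def IsSubOrthoTetra (w : Fin 4 → V) : Prop :=
  ∀ i : Fin 4,
    NonobtuseTri (w (i.succAbove 0)) (w (i.succAbove 1)) (w (i.succAbove 2)) ∧
    ∃ p, IsOrthProjTri (w i) p (w (i.succAbove 0)) (w (i.succAbove 1)) (w (i.succAbove 2)) ∧
      p ∈ SubOrthoSet (w (i.succAbove 0)) (w (i.succAbove 1)) (w (i.succAbove 2))

end Tetra

/-!
It suffices to show that `(A + ε • 1)⁻¹` is a weakly diagonally dominant Stieltjes matrix for
every `ε > 0` and then let `ε → 0`. If `τ` is the smallest entry of an ultrametric matrix `A` on at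
least two indices, the indices split into two classes with `A i j = τ` across classes, so
`A + ε • 1 = (N + ε • 1) + τ J` where `N = A - τ J` is block diagonal and its two blocks are again
ultrametric. By induction on the size, `M = (N + ε • 1)⁻¹` is a weakly diagonally dominant
Stieltjes matrix, and the Sherman–Morrison formula
`(M⁻¹ + τ J)⁻¹ = M - τ / (1 + τ 1ᵀ M 1) • (M 1) (M 1)ᵀ`
shows that adding `τ J` with `τ ≥ 0` preserves this. The perturbation by `ε` is needed because
`A - τ J` itself may be singular.
-/

def IsWDDStieltjes {ι : Type*} [Fintype ι] (M : Matrix ι ι ℝ) : Prop :=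
  IsStieltjes M ∧ IsWDD M

namespace IsUltra

variable {ι : Type*} {A : Matrix ι ι ℝ}

theorem submatrix (hA : IsUltra A) {κ : Type*} (f : κ → ι) : IsUltra (A.submatrix f f) :=
  ⟨fun _ _ => hA.1 _ _, fun _ _ => hA.2.1 _ _, fun _ _ _ => hA.2.2 _ _ _⟩

theorem sub_const (hA : IsUltra A) {τ : ℝ} (hτ : ∀ i j, τ ≤ A i j) :
    IsUltra (A - of fun _ _ => τ) := by
  refine ⟨fun i j => ?_, fun i j => ?_, fun i j k => ?_⟩ <;>
    simp only [Matrix.sub_apply, of_apply, min_sub_sub_right]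
  · exact sub_nonneg.mpr (hτ i j)
  · exact sub_le_sub_right (hA.2.1 i j) τ
  · exact sub_le_sub_right (hA.2.2 i j k) τ

theorem posSemidef_of_subsingleton [Fintype ι] [Subsingleton ι] (hA : IsUltra A) :
    A.PosSemidef := by
  classical
  have hdiag : A = diagonal fun i => A i i := by
    ext i j
    obtain rfl := Subsingleton.elim i j
    simp
  exact hdiag ▸ PosSemidef.diagonal fun i => hA.1 i i

theorem exists_partition [Fintype ι] [Nontrivial ι] (hA : IsUltra A) (hs : A.IsSymm) :
    ∃ τ, (∀ i j, τ ≤ A i j) ∧ ∃ p : ι → Prop, (∃ i, p i) ∧ (∃ j, ¬p j) ∧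
      ∀ i j, ¬(p i ↔ p j) → A i j = τ := by
  obtain ⟨⟨a₀, b₀⟩, -, hmin⟩ :=
    Finset.exists_min_image Finset.univ (fun q : ι × ι => A q.1 q.2) Finset.univ_nonempty
  set τ := A a₀ b₀
  have hτ (i j : ι) : τ ≤ A i j := hmin (i, j) (Finset.mem_univ _)
  obtain ⟨a, b, hab, habτ⟩ : ∃ a b, a ≠ b ∧ A a b ≤ τ := by
    by_cases h : a₀ = b₀
    · obtain ⟨c, hc⟩ := exists_ne a₀
      exact ⟨a₀, c, hc.symm, (hA.2.1 a₀ c).trans_eq (by simp only [τ, h])⟩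
    · exact ⟨a₀, b₀, h, le_rfl⟩
  set p : ι → Prop := fun k => k = a ∨ τ < A a k
  have hcross (i j : ι) (hi : p i) (hj : ¬p j) : A i j = τ := by
    simp only [p, not_or, not_lt] at hj
    refine le_antisymm ?_ (hτ i j)
    rcases hi with rfl | hi
    · exact hj.2
    · by_contra! hij
      exact (lt_min hi hij).not_ge ((hA.2.2 a j i).trans hj.2)
  refine ⟨τ, hτ, p, ⟨a, Or.inl rfl⟩, ⟨b, ?_⟩, fun i j hij => ?_⟩
  · rintro (h | h)
    · exact hab h.symm
    · exact h.not_ge habτ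
  · by_cases hi : p i
    · exact hcross i j hi fun hj => hij (iff_of_true hi hj)
    · rw [← hs.apply i j]
      exact hcross j i (by tauto) hi

end IsUltra

theorem posSemidef_const {ι : Type*} [Fintype ι] {τ : ℝ} (hτ : 0 ≤ τ) :
    (of fun _ _ => τ : Matrix ι ι ℝ).PosSemidef := by
  convert (posSemidef_vecMulVec_self_star (1 : ι → ℝ)).smul hτ using 1
  ext i j
  simp

theorem inv_add_const_eq {ι : Type*} [Fintype ι] [DecidableEq ι] {N : Matrix ι ι ℝ}
    (hN : IsUnit N) (hsymm : N.IsSymm) (τ : ℝ) (hτ : 1 + τ * ∑ i, (N⁻¹ *ᵥ 1) i ≠ 0) :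
    (N + of fun _ _ => τ)⁻¹ =
      N⁻¹ - (τ / (1 + τ * ∑ i, (N⁻¹ *ᵥ 1) i)) • vecMulVec (N⁻¹ *ᵥ 1) (N⁻¹ *ᵥ 1) := by
  set w := N⁻¹ *ᵥ 1
  set σ := ∑ i, w i
  set c := τ / (1 + τ * σ)
  have hNM : N * N⁻¹ = 1 := mul_nonsing_inv _ ((isUnit_iff_isUnit_det N).mp hN)
  have hrow (i : ι) : ∑ k, N i k * w k = 1 :=
    congrFun (by rw [mulVec_mulVec, hNM, one_mulVec] : N *ᵥ w = 1) i
  have hcol (j : ι) : ∑ k, N⁻¹ k j = w j := by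
    simp only [w, mulVec, dotProduct, Pi.one_apply, mul_one]
    exact Finset.sum_congr rfl fun k _ => hsymm.inv.apply j k
  refine inv_eq_right_inv ?_
  ext i j
  have hexpand : ((N + of fun _ _ => τ) * (N⁻¹ - c • vecMulVec w w) : Matrix ι ι ℝ) i j =
      (N * N⁻¹) i j + τ * ∑ k, N⁻¹ k j - c * w j * ∑ k, N i k * w k - c * τ * w j * σ := by
    rw [mul_apply, mul_apply, Finset.mul_sum, Finset.mul_sum, Finset.mul_sum,
      ← Finset.sum_add_distrib, ← Finset.sum_sub_distrib, ← Finset.sum_sub_distrib]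
    refine Finset.sum_congr rfl fun k _ => ?_
    simp only [Matrix.add_apply, Matrix.sub_apply, Matrix.smul_apply, of_apply,
      vecMulVec_apply, smul_eq_mul]
    ring
  rw [hexpand, hNM, hcol, hrow]
  linear_combination (-w j) * div_mul_cancel₀ τ hτ

namespace IsWDDStieltjes

variable {ι κ : Type*} [Fintype ι] [Fintype κ]

theorem submatrix_equiv {M : Matrix ι ι ℝ} (hM : IsWDDStieltjes M) (e : κ ≃ ι) :
    IsWDDStieltjes (M.submatrix e e) := by
  refine ⟨⟨hM.1.1.submatrix e.injective, fun i j hij => hM.1.2 _ _ (e.injective.ne hij)⟩,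
    fun i => ?_⟩
  simpa only [submatrix_apply, Equiv.sum_comp e (M (e i))] using hM.2 (e i)

theorem fromBlocks_zero [DecidableEq ι] [DecidableEq κ] {B : Matrix ι ι ℝ} {C : Matrix κ κ ℝ}
    (hB : IsWDDStieltjes B) (hC : IsWDDStieltjes C) : IsWDDStieltjes (fromBlocks B 0 0 C) := by
  refine ⟨⟨?_, ?_⟩, ?_⟩
  · have := hB.1.1.isUnit.invertible
    have hpsd : (fromBlocks B 0 0 C).PosSemidef := by
      simpa using (PosDef.fromBlocks₁₁ 0 C hB.1.1).mpr (by simpa using hC.1.1.posSemidef)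
    exact hpsd.posDef_iff_isUnit.mpr (isUnit_fromBlocks_zero₁₂.mpr ⟨hB.1.1.isUnit, hC.1.1.isUnit⟩)
  · rintro (i | i) (j | j) hij
    · exact hB.1.2 i j (by simpa using hij)
    · exact le_rfl
    · exact le_rfl
    · exact hC.1.2 i j (by simpa using hij)
  · rintro (i | i)
    · simpa [Fintype.sum_sum_type] using hB.2 i
    · simpa [Fintype.sum_sum_type] using hC.2 i

theorem inv_of_blocks [DecidableEq ι] {N : Matrix ι ι ℝ} (p : ι → Prop) [DecidablePred p]
    (hN : ∀ i j, ¬(p i ↔ p j) → N i j = 0)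
    (hB : IsWDDStieltjes (N.submatrix (Subtype.val : {i // p i} → ι) Subtype.val)⁻¹)
    (hC : IsWDDStieltjes (N.submatrix (Subtype.val : {i // ¬p i} → ι) Subtype.val)⁻¹) :
    IsWDDStieltjes N⁻¹ := by
  set e := Equiv.sumCompl p
  have hblocks : N.submatrix e e = fromBlocks (N.submatrix Subtype.val Subtype.val) 0 0
      (N.submatrix Subtype.val Subtype.val) := by
    ext (i | i) (j | j)
    · rfl
    · exact hN _ _ (by simp [e, i.2, j.2])
    · exact hN _ _ (by simp [e, i.2, j.2])
    · rfl
  have hinv : N⁻¹.submatrix e e = fromBlocks (N.submatrix Subtype.val Subtype.val)⁻¹ 0 0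
      (N.submatrix (Subtype.val : {i // ¬p i} → ι) Subtype.val)⁻¹ := by
    rw [← inv_submatrix_equiv, hblocks, inv_fromBlocks_zero₁₂_of_isUnit_iff]
    · simp
    · simp only [(posDef_inv_iff.mp hB.1.1).isUnit, (posDef_inv_iff.mp hC.1.1).isUnit]
  have := (hinv ▸ hB.fromBlocks_zero hC).submatrix_equiv e.symm
  rwa [submatrix_submatrix, e.self_comp_symm, submatrix_id_id] at this

theorem inv_of_subsingleton [DecidableEq ι] [Subsingleton ι] {N : Matrix ι ι ℝ}
    (hN : N.PosDef) : IsWDDStieltjes N⁻¹ :=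
  ⟨⟨hN.inv, fun i j hij => absurd (Subsingleton.elim i j) hij⟩,
    fun i => (Fintype.sum_subsingleton (N⁻¹ i) i).symm ▸ hN.inv.diag_pos.le⟩

theorem inv_add_const [DecidableEq ι] {N : Matrix ι ι ℝ} (hN : IsWDDStieltjes N⁻¹) {τ : ℝ}
    (hτ : 0 ≤ τ) : IsWDDStieltjes (N + of fun _ _ => τ)⁻¹ := by
  obtain ⟨⟨hMpd, hMz⟩, hMw⟩ := hN
  have hNpd : N.PosDef := posDef_inv_iff.mp hMpd
  set w := N⁻¹ *ᵥ 1
  have hw (i : ι) : w i = ∑ j, N⁻¹ i j := by simp [w, mulVec, dotProduct]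
  have hw0 (i : ι) : 0 ≤ w i := hw i ▸ hMw i
  set σ := ∑ i, w i
  have hd : 0 < 1 + τ * σ :=
    add_pos_of_pos_of_nonneg one_pos (mul_nonneg hτ (Finset.sum_nonneg fun i _ => hw0 i))
  have hc : 0 ≤ τ / (1 + τ * σ) := by positivity
  have heq : (N + of fun _ _ => τ)⁻¹ = N⁻¹ - (τ / (1 + τ * σ)) • vecMulVec w w :=
    inv_add_const_eq hNpd.isUnit (isHermitian_iff_isSymm.mp hNpd.isHermitian) τ hd.ne'
  refine ⟨⟨heq ▸ (hNpd.add_posSemidef (posSemidef_const hτ)).inv, fun i j hij => ?_⟩,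
    fun i => ?_⟩
  · rw [heq]
    simp only [Matrix.sub_apply, Matrix.smul_apply, vecMulVec_apply, smul_eq_mul]
    nlinarith [hMz i j hij, mul_nonneg hc (mul_nonneg (hw0 i) (hw0 j))]
  · have hsum : ∑ j, ((N + of fun _ _ => τ)⁻¹ : Matrix ι ι ℝ) i j = w i / (1 + τ * σ) := by
      simp only [heq, Matrix.sub_apply, Matrix.smul_apply, vecMulVec_apply, smul_eq_mul,
        Finset.sum_sub_distrib, ← Finset.mul_sum, ← hw]
      field_simp
      ring
    rw [hsum]
    exact div_nonneg (hw0 i) hd.le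

open Filter Topology in
theorem inv_of_forall_add_smul_one [DecidableEq ι] {A : Matrix ι ι ℝ} (hA : A.PosDef)
    (h : ∀ ε : ℝ, 0 < ε → IsWDDStieltjes (A + ε • 1)⁻¹) : IsWDDStieltjes A⁻¹ := by
  have hcont : ContinuousAt Inv.inv A := continuousAt_matrix_inv A
    (NormedRing.inverse_continuousAt ((isUnit_iff_isUnit_det A).mp hA.isUnit).unit)
  have hpath : Tendsto (fun ε : ℝ => A + ε • 1) (𝓝[>] 0) (𝓝 A) := by
    have : Continuous fun ε : ℝ => A + ε • (1 : Matrix ι ι ℝ) := by fun_prop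
    simpa using (this.tendsto 0).mono_left nhdsWithin_le_nhds
  have hentry (i j : ι) : Tendsto (fun ε : ℝ => (A + ε • 1)⁻¹ i j) (𝓝[>] 0) (𝓝 (A⁻¹ i j)) :=
    tendsto_pi_nhds.mp (tendsto_pi_nhds.mp (hcont.tendsto.comp hpath) i) j
  refine ⟨⟨hA.inv, fun i j hij => ?_⟩, fun i => ?_⟩
  · exact le_of_tendsto (hentry i j)
      (eventually_nhdsWithin_of_forall fun ε hε => (h ε hε).1.2 i j hij)
  · exact ge_of_tendsto (tendsto_finsetSum _ fun j _ => hentry i j)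
      (eventually_nhdsWithin_of_forall fun ε hε => (h ε hε).2 i)

end IsWDDStieltjes

theorem IsUltra.isWDDStieltjes_inv_add_smul_one {ι : Type*} [Fintype ι] [DecidableEq ι]
    {A : Matrix ι ι ℝ} (hA : IsUltra A) (hs : A.IsSymm) {ε : ℝ} (hε : 0 < ε) :
    IsWDDStieltjes (A + ε • 1)⁻¹ := by
  refine Finite.induction_subsingleton_or_nontrivial (P := fun ι => ∀ [Fintype ι] [DecidableEq ι]
    (A : Matrix ι ι ℝ), IsUltra A → A.IsSymm → IsWDDStieltjes (A + ε • 1)⁻¹) ι ?_ ?_ A hA hs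
  · intro ι _ _ _ _ A hA _
    exact .inv_of_subsingleton
      (PosDef.posSemidef_add hA.posSemidef_of_subsingleton (PosDef.one.smul hε))
  · intro ι _ _ IH _ _ A hA hs
    classical
    obtain ⟨τ, hτ, p, ⟨a, ha⟩, ⟨b, hb⟩, hcross⟩ := hA.exists_partition hs
    have hτ0 : 0 ≤ τ := hcross a b (by tauto) ▸ hA.1 a b
    set N := A - of fun _ _ => τ
    have hblock (q : ι → Prop) [DecidablePred q] (hq : ∃ x, ¬q x) :
        IsWDDStieltjes ((N + ε • 1).submatrix (Subtype.val : {i // q i} → ι) Subtype.val)⁻¹ := by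
      have hsub : (N + ε • 1).submatrix (Subtype.val : {i // q i} → ι) Subtype.val =
          (A.submatrix Subtype.val Subtype.val - (of fun _ _ => τ) + ε • 1 :
            Matrix {i // q i} {i // q i} ℝ) := by
        ext i j
        simp [N, one_apply, Subtype.ext_iff]
      rw [hsub]
      exact IH _ (Finite.card_subtype_lt hq.choose_spec) _
        ((hA.submatrix _).sub_const fun _ _ => hτ _ _)
        ((hs.submatrix _).sub (IsSymm.ext fun _ _ => rfl))
    have hsplit : A + ε • 1 = N + ε • 1 + of fun _ _ => τ := by simp only [N]; abel
    rw [hsplit]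
    refine IsWDDStieltjes.inv_add_const (.inv_of_blocks p (fun i j hij => ?_) (hblock _ ⟨b, hb⟩)
      (hblock _ ⟨a, not_not.mpr ha⟩)) hτ0
    have hne : i ≠ j := by rintro rfl; exact hij Iff.rfl
    simp [N, hcross i j hij, one_apply_ne hne]

theorem stmt15 (n : ℕ) (A : Matrix (Fin n) (Fin n) ℝ) (hpd : A.PosDef) (hu : IsUltra A) :
    IsStieltjes A⁻¹ ∧ IsWDD A⁻¹ :=
  IsWDDStieltjes.inv_of_forall_add_smul_one hpd fun _ hε =>
    hu.isWDDStieltjes_inv_add_smul_one (isHermitian_iff_isSymm.mp hpd.isHermitian) hε
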